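/- For positive integers k and r, let P_k^r denote the probability that 2^r independent random binary search trees with k leaves are pairwise isomorphic, and let δ(k) = 1 if k is even and δ(k) = 0 otherwise. Then P_k^r = 1 for k ∈ {1, 2, 3} and every r, and for every k ≥ 4 and every r, P_k^r = Σ_{i=1}^{⌊(k−1)/2⌋} (2/(k−1))^{2^r}·P_i^r·P_{k−i}^r + δ(k)·(1/(k−1))^{2^r}·(2^{2^r−1}·(P_{k/2}^r)² − (2^{2^r−1}−1)·P_{k/2}^{r+1}). -/

import Mathlib

open Filter Finset
open scoped Classical

/-- Ordered binary trees: every node has exactly two or no children. -/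
inductive BT : Type
  | leaf : BT
  | node : BT → BT → BT
deriving DecidableEq

namespace BT

/-- The size of a binary tree: its number of leaves. -/
def size : BT → ℕ
  | leaf => 1
  | node l r => size l + size r

/-- The multiset of all fringe subtrees of a tree (one for every node). -/
def fringe : BT → Multiset BT
  | leaf => {leaf}
  | node l r => node l r ::ₘ (fringe l + fringe r)

/-- The finset of all ordered binary trees with `n` leaves. -/
def treesOfSize : ℕ → Finset BT
  | 0 => ∅
  | 1 => {leaf}
  | n + 2 =>
    (Finset.range (n + 1)).attach.biUnion fun k =>
      ((treesOfSize (k.1 + 1)) ×ˢ (treesOfSize (n + 1 - k.1))).image fun p => node p.1 p.2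
  decreasing_by
    · have := Finset.mem_range.mp k.2; omega
    · omega

/-- Boolean test whether two ordered binary trees are isomorphic as unordered trees. -/
def isoB : BT → BT → Bool
  | leaf, leaf => true
  | leaf, node _ _ => false
  | node _ _, leaf => false
  | node l1 r1, node l2 r2 => (isoB l1 l2 && isoB r1 r2) || (isoB l1 r2 && isoB r1 l2)

/-- An injective encoding of ordered binary trees into the natural numbers. -/
def encode : BT → ℕ
  | leaf => 0
  | node l r => Nat.pair (encode l) (encode r) + 1

/-- The canonical representative of the isomorphism class of a binary tree:
two trees are isomorphic (equal as unordered trees) iff their canonical forms agree. -/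
def canon : BT → BT
  | leaf => leaf
  | node l r =>
    let l' := canon l
    let r' := canon r
    if encode l' ≤ encode r' then node l' r' else node r' l'

/-- Number of isomorphism classes of unordered binary trees represented among
the fringe subtrees of `t`. -/
def isoClasses (t : BT) : ℕ := ((fringe t).toFinset.image canon).card

/-- Number of distinct ordered binary trees occurring among the fringe subtrees of `t`. -/
def numDistinct (t : BT) : ℕ := (fringe t).toFinset.card

/-- The probability of a tree under the binary search tree model. -/
noncomputable def pbst (t : BT) : ℝ :=
  ((fringe t).map fun s => if 1 < size s then (1 : ℝ) / ((size s : ℝ) - 1) else 1).prod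

/-- Expectation of `f` under the uniform distribution on trees with `n` leaves. -/
noncomputable def unifE (n : ℕ) (f : BT → ℝ) : ℝ :=
  (∑ t ∈ treesOfSize n, f t) / (treesOfSize n).card

/-- Probability of an event under the uniform distribution on trees with `n` leaves. -/
noncomputable def unifP (n : ℕ) (p : BT → Prop) : ℝ :=
  ((treesOfSize n).filter p).card / (treesOfSize n).card

/-- Expectation of `f` under the binary search tree distribution on trees with `n` leaves. -/
noncomputable def bstE (n : ℕ) (f : BT → ℝ) : ℝ :=
  ∑ t ∈ treesOfSize n, pbst t * f t

/-- Probability of an event under the binary search tree distribution on trees with `n` leaves. -/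
noncomputable def bstP (n : ℕ) (p : BT → Prop) : ℝ :=
  ∑ t ∈ (treesOfSize n).filter p, pbst t

end BT

namespace BT

/-- `P_k^r`: the probability that `2^r` independent random binary search trees with `k`
leaves are pairwise isomorphic. -/
noncomputable def PisoPow (k r : ℕ) : ℝ :=
  ∑ f ∈ Fintype.piFinset (fun _ : Fin (2 ^ r) => treesOfSize k),
    (∏ i, pbst (f i)) * (if ∀ i j, isoB (f i) (f j) then 1 else 0)

end BT

/-!
Let `isoProb t` be the probability that a random binary search tree of the size of `t` is
isomorphic to `t`. Conditioning on the first of `N = 2 ^ r` trees gives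
`P_k^r = E[isoProb T ^ (N - 1)] = isoMoment k (N - 1)` for a random binary search tree `T` with
`k` leaves. The root split of a random binary search tree is uniform on `1, …, k - 1`, so for
`t = node l r` one gets `isoProb t = c · isoProb l · isoProb r / (k - 1)` with `c = 1` if `l ≅ r`
and `c = 2` otherwise. Writing `c ^ n = 2 ^ n - (2 ^ n - 1) · [l ≅ r]` splits the moment of order
`n` into a convolution of moments of the two subtrees and a diagonal part. On the diagonal both
subtrees have `k / 2` leaves and the same `isoProb`, which yields the moment of order
`2 n + 1 = 2 ^ (r + 1) - 1`, i.e. `P_{k/2}^{r+1}`. Folding the convolution at `k / 2` gives the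
recurrence, and the same identity started from `P_1^r = 1` gives `P_2^r = P_3^r = 1`.
-/

theorem Finset.sum_Icc_ite_sub_eq_self {M : Type*} [AddCommMonoid M] {k : ℕ} (hk : k ≠ 0)
    (f : ℕ → M) :
    ∑ a ∈ Icc 1 (k - 1), (if k - a = a then f a else 0) = if Even k then f (k / 2) else 0 := by
  split_ifs with he
  · rw [sum_eq_single_of_mem (k / 2) (mem_Icc.2 (by grind)) fun a _ ha => if_neg (by grind)]
    exact if_pos (by grind)
  · exact sum_eq_zero fun a _ => if_neg (by grind)

theorem Finset.sum_Icc_eq_two_nsmul_sum_add {M : Type*} [AddCommMonoid M] {k : ℕ} (hk : k ≠ 0)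
    (f : ℕ → M) (hf : ∀ a ≤ k, f (k - a) = f a) :
    ∑ a ∈ Icc 1 (k - 1), f a =
      2 • ∑ a ∈ Icc 1 ((k - 1) / 2), f a + if Even k then f (k / 2) else 0 := by
  have hsplit : ∀ a ∈ Icc 1 (k - 1), f a = (if 2 * a < k then f a else 0) +
      (if k < 2 * a then f a else 0) + (if k - a = a then f a else 0) := fun a _ => by
    split_ifs <;> first | omega | simp
  have hreflect : ∑ a ∈ Icc 1 (k - 1), (if k < 2 * a then f a else 0) =
      ∑ a ∈ Icc 1 (k - 1), (if 2 * a < k then f a else 0) := by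
    refine sum_nbij' (k - ·) (k - ·) ?_ ?_ ?_ ?_ fun a ha => ?_
    iterate 4 (intro a ha; simp only [mem_Icc] at ha ⊢; omega)
    have := mem_Icc.1 ha
    rw [hf a (by omega)]
    exact if_congr (by omega) rfl rfl
  have hlow : ∑ a ∈ Icc 1 (k - 1), (if 2 * a < k then f a else 0) =
      ∑ a ∈ Icc 1 ((k - 1) / 2), f a := by
    rw [← sum_filter]
    congr 1
    ext a
    simp only [mem_filter, mem_Icc]
    omega
  rw [sum_congr rfl hsplit, sum_add_distrib, sum_add_distrib, hreflect, hlow,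
    sum_Icc_ite_sub_eq_self hk, two_nsmul]

namespace BT

theorem one_le_size (t : BT) : 1 ≤ t.size := by
  induction t with
  | leaf => rfl
  | node l r _ _ => simp only [size]; omega

theorem mem_treesOfSize {t : BT} {n : ℕ} : t ∈ treesOfSize n ↔ t.size = n := by
  induction t generalizing n with
  | leaf =>
    match n with
    | 0 | 1 | _ + 2 => simp [treesOfSize, size]
  | node l r ihl ihr =>
    have := one_le_size l
    have := one_le_size r
    match n with
    | 0 =>
      simp only [treesOfSize, notMem_empty, size, Nat.add_eq_zero_iff, false_iff, not_and]
      omega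
    | 1 =>
      simp only [treesOfSize, mem_singleton, reduceCtorEq, size, false_iff]
      omega
    | m + 2 =>
      simp only [treesOfSize, mem_biUnion, mem_attach, true_and, mem_image, mem_product,
        Prod.exists, node.injEq, Subtype.exists, mem_range, size]
      constructor
      · rintro ⟨k, -, _, _, ⟨hl, hr⟩, rfl, rfl⟩
        rw [ihl] at hl; rw [ihr] at hr; omega
      · intro h
        exact ⟨l.size - 1, by omega, l, r, ⟨ihl.2 (by omega), ihr.2 (by omega)⟩, rfl, rfl⟩

theorem sum_treesOfSize_eq_sum_node {k : ℕ} (hk : 2 ≤ k) (F : BT → ℝ) :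
    ∑ t ∈ treesOfSize k, F t =
      ∑ a ∈ Icc 1 (k - 1), ∑ l ∈ treesOfSize a, ∑ r ∈ treesOfSize (k - a), F (node l r) := by
  obtain ⟨m, rfl⟩ : ∃ m, k = m + 2 := ⟨k - 2, by omega⟩
  have hdisj : ((range (m + 1)).attach : Set _).PairwiseDisjoint fun i : range (m + 1) =>
      (treesOfSize (i.1 + 1) ×ˢ treesOfSize (m + 1 - i.1)).image fun p => node p.1 p.2 := by
    intro i _ j _ hij
    simp only [Function.onFun, disjoint_left, mem_image, mem_product, Prod.exists, not_exists,
      not_and, mem_treesOfSize]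
    rintro _ ⟨l, r, ⟨hl, -⟩, rfl⟩ l' r' ⟨hl', -⟩ h
    cases h
    exact hij (Subtype.ext (by omega))
  rw [treesOfSize, sum_biUnion hdisj]
  have hinj (s : Finset (BT × BT)) : Set.InjOn (fun p : BT × BT => node p.1 p.2) s :=
    fun p _ q _ h => Prod.ext (node.inj h).1 (node.inj h).2
  rw [sum_attach (range (m + 1)) fun i => ∑ t ∈ (treesOfSize (i + 1) ×ˢ
    treesOfSize (m + 1 - i)).image (fun p : BT × BT => node p.1 p.2), F t]
  simp only [sum_image (hinj _), sum_product]
  have hIcc : Icc 1 (m + 2 - 1) = (range (m + 1)).map (addRightEmbedding 1) := by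
    ext a
    simp only [mem_Icc, Finset.mem_map, mem_range, addRightEmbedding_apply]
    exact ⟨fun h => ⟨a - 1, by omega, by omega⟩, fun ⟨b, hb, e⟩ => by omega⟩
  rw [hIcc, sum_map]
  refine sum_congr rfl fun i _ => ?_
  rw [addRightEmbedding_apply, show m + 2 - (i + 1) = m + 1 - i by omega]

theorem pbst_leaf : pbst leaf = 1 := by
  simp [pbst, fringe, size]

theorem pbst_node (l r : BT) :
    pbst (node l r) = pbst l * pbst r / ((l.size + r.size : ℕ) - 1 : ℝ) := by
  have : 1 < l.size + r.size := by have := one_le_size l; have := one_le_size r; omega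
  simp only [pbst, fringe, Multiset.map_cons, Multiset.map_add, Multiset.prod_cons,
    Multiset.prod_add, size, this, ↓reduceIte, Nat.cast_add]
  ring

theorem sum_pbst_mul_eq_sum_node {k : ℕ} (hk : 2 ≤ k) (F : BT → ℝ) :
    ∑ t ∈ treesOfSize k, pbst t * F t = ((k : ℝ) - 1)⁻¹ *
      ∑ a ∈ Icc 1 (k - 1), ∑ l ∈ treesOfSize a, ∑ r ∈ treesOfSize (k - a),
        pbst l * pbst r * F (node l r) := by
  rw [sum_treesOfSize_eq_sum_node hk]
  simp only [mul_sum]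
  refine sum_congr rfl fun a ha => sum_congr rfl fun l hl => sum_congr rfl fun r hr => ?_
  rw [pbst_node, mem_treesOfSize.1 hl, mem_treesOfSize.1 hr,
    Nat.add_sub_cancel' ((mem_Icc.1 ha).2.trans (Nat.sub_le k 1))]
  ring

@[simp]
theorem isoB_node_node {l₁ r₁ l₂ r₂ : BT} :
    isoB (node l₁ r₁) (node l₂ r₂) ↔
      isoB l₁ l₂ ∧ isoB r₁ r₂ ∨ isoB l₁ r₂ ∧ isoB r₁ l₂ := by
  simp [isoB]

@[simp]
theorem isoB_refl (t : BT) : isoB t t := by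
  induction t with
  | leaf => rfl
  | node l r ihl ihr => simp [ihl, ihr]

theorem isoB_symm {s t : BT} (h : isoB s t) : isoB t s := by
  induction s generalizing t with
  | leaf => cases t <;> simp_all [isoB]
  | node l r ihl ihr =>
    cases t with
    | leaf => simp [isoB] at h
    | node l' r' =>
      rcases isoB_node_node.1 h with ⟨h₁, h₂⟩ | ⟨h₁, h₂⟩
      · exact isoB_node_node.2 (Or.inl ⟨ihl h₁, ihr h₂⟩)
      · exact isoB_node_node.2 (Or.inr ⟨ihr h₂, ihl h₁⟩)

theorem isoB_trans {s t u : BT} (h₁ : isoB s t) (h₂ : isoB t u) : isoB s u := by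
  induction s generalizing t u with
  | leaf => cases t <;> cases u <;> simp_all [isoB]
  | node l r ihl ihr =>
    cases t with
    | leaf => simp [isoB] at h₁
    | node l' r' =>
      cases u with
      | leaf => simp [isoB] at h₂
      | node l'' r'' =>
        simp only [isoB_node_node] at h₁ h₂ ⊢
        rcases h₁ with ⟨a, b⟩ | ⟨a, b⟩ <;> rcases h₂ with ⟨c, d⟩ | ⟨c, d⟩
        · exact Or.inl ⟨ihl a c, ihr b d⟩
        · exact Or.inr ⟨ihl a c, ihr b d⟩
        · exact Or.inr ⟨ihl a d, ihr b c⟩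
        · exact Or.inl ⟨ihl a d, ihr b c⟩

theorem size_eq_of_isoB {s t : BT} (h : isoB s t) : s.size = t.size := by
  induction s generalizing t with
  | leaf => cases t <;> simp_all [isoB]
  | node l r ihl ihr =>
    cases t with
    | leaf => simp [isoB] at h
    | node l' r' =>
      simp only [size]
      rcases isoB_node_node.1 h with ⟨h₁, h₂⟩ | ⟨h₁, h₂⟩
      · rw [ihl h₁, ihr h₂]
      · rw [ihl h₁, ihr h₂, add_comm]

-- When `l ≅ r` the two matchings of subtrees describe the same event, counted once.
theorem ite_isoB_node (l r l' r' : BT) :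
    (if isoB (node l' r') (node l r) then (1 : ℝ) else 0) =
      (if isoB l' l then 1 else 0) * (if isoB r' r then 1 else 0) +
        (if isoB l r then 0 else 1) *
          ((if isoB l' r then 1 else 0) * (if isoB r' l then 1 else 0)) := by
  simp only [isoB_node_node, ite_zero_mul_ite_zero, mul_one]
  by_cases hlr : isoB l r
  · have hBA : isoB l' r ∧ isoB r' l → isoB l' l ∧ isoB r' r := fun ⟨h₁, h₂⟩ =>
      ⟨isoB_trans h₁ (isoB_symm hlr), isoB_trans h₂ hlr⟩
    simp only [hlr, if_true, zero_mul, add_zero, or_iff_left_of_imp hBA]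
  · have hAB : ¬ ((isoB l' l ∧ isoB r' r) ∧ (isoB l' r ∧ isoB r' l)) := fun ⟨⟨h₁, _⟩, h₂, _⟩ =>
      hlr (isoB_trans (isoB_symm h₁) h₂)
    simp only [hlr, if_false, one_mul, Bool.false_eq_true]
    split_ifs <;> simp_all

noncomputable def isoProb (t : BT) : ℝ := bstP t.size fun s => isoB s t

noncomputable def isoMoment (k n : ℕ) : ℝ := bstE k fun t => isoProb t ^ n

theorem sum_pbst_mul_isoB (a : ℕ) (t : BT) :
    ∑ s ∈ treesOfSize a, pbst s * (if isoB s t then 1 else 0) =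
      if a = t.size then isoProb t else 0 := by
  split_ifs with ha
  · simp only [ha, isoProb, bstP, sum_filter, mul_ite, mul_one, mul_zero]
    -- `bstP` filters with the classical `Decidable` instance
    congr!
  · refine sum_eq_zero fun s hs => ?_
    have : ¬ isoB s t := fun h => ha (mem_treesOfSize.1 hs ▸ size_eq_of_isoB h)
    simp [this]

theorem isoProb_congr {s t : BT} (h : isoB s t) : isoProb s = isoProb t := by
  simp only [isoProb, bstP, size_eq_of_isoB h]
  congr! 2 with u
  exact ⟨fun h' => isoB_trans h' h, fun h' => isoB_trans h' (isoB_symm h)⟩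

theorem isoProb_leaf : isoProb leaf = 1 := by
  simpa [treesOfSize, size, pbst_leaf] using (sum_pbst_mul_isoB 1 leaf).symm

theorem sum_pbst_mul_isoB_mul_isoB {k : ℕ} (x y : BT) (hk : x.size + y.size = k) :
    ∑ a ∈ Icc 1 (k - 1), ∑ l ∈ treesOfSize a, ∑ r ∈ treesOfSize (k - a),
      pbst l * pbst r * ((if isoB l x then 1 else 0) * (if isoB r y then 1 else 0)) =
      isoProb x * isoProb y := by
  have hx := one_le_size x
  have hy := one_le_size y
  simp only [mul_mul_mul_comm (pbst _) (pbst _), ← sum_mul_sum, sum_pbst_mul_isoB]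
  rw [sum_eq_single_of_mem x.size (mem_Icc.2 ⟨hx, by omega⟩) fun a _ ha => by simp [ha]]
  simp [show k - x.size = y.size by omega]

theorem isoProb_node (l r : BT) :
    isoProb (node l r) =
      (if isoB l r then 1 else 2) / ((l.size + r.size : ℕ) - 1 : ℝ) * (isoProb l * isoProb r) := by
  have hk : 2 ≤ (node l r).size := by
    have := one_le_size l; have := one_le_size r; simp only [size]; omega
  have h := sum_pbst_mul_isoB (node l r).size (node l r)
  rw [if_pos rfl, sum_pbst_mul_eq_sum_node hk] at h
  rw [← h]
  simp only [ite_isoB_node, mul_add, sum_add_distrib,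
    mul_left_comm _ (if isoB l r then (0 : ℝ) else 1), ← mul_sum]
  rw [sum_pbst_mul_isoB_mul_isoB (k := (node l r).size) l r rfl,
    sum_pbst_mul_isoB_mul_isoB (k := (node l r).size) r l (add_comm _ _)]
  simp only [size]
  split_ifs <;> ring

theorem forall_isoB_cons_iff {n : ℕ} (t : BT) (g : Fin n → BT) :
    (∀ i j, isoB ((Fin.cons t g : Fin (n + 1) → BT) i) ((Fin.cons t g : Fin (n + 1) → BT) j)) ↔
      ∀ i, isoB (g i) t := by
  simp only [Fin.forall_fin_succ, Fin.cons_zero, Fin.cons_succ]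
  exact ⟨fun h i => (h.2 i).1, fun h => ⟨⟨isoB_refl t, fun j => isoB_symm (h j)⟩,
    fun i => ⟨h i, fun j => isoB_trans (h i) (isoB_symm (h j))⟩⟩⟩

theorem isoProb_pow_eq_sum_piFinset {k : ℕ} {t : BT} (ht : t ∈ treesOfSize k) (n : ℕ) :
    isoProb t ^ n = ∑ g ∈ Fintype.piFinset (fun _ : Fin n => treesOfSize k),
      (∏ i, pbst (g i)) * (if ∀ i, isoB (g i) t then 1 else 0) := by
  have h := sum_pbst_mul_isoB k t
  rw [if_pos (mem_treesOfSize.1 ht).symm] at h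
  rw [← Fin.prod_const, ← h, prod_univ_sum]
  simp only [prod_mul_distrib, prod_boole, mem_univ, true_implies]

theorem sum_piFinset_prod_pbst_mul_isoB (k n : ℕ) :
    ∑ f ∈ Fintype.piFinset (fun _ : Fin (n + 1) => treesOfSize k),
      (∏ i, pbst (f i)) * (if ∀ i j, isoB (f i) (f j) then 1 else 0) = isoMoment k n := by
  rw [← sum_equiv (Fin.consEquiv fun _ => BT)
    (s := treesOfSize k ×ˢ Fintype.piFinset fun _ : Fin n => treesOfSize k)
    (fun p => by simp [Fin.forall_fin_succ]) fun _ _ => rfl]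
  simp only [Fin.consEquiv_apply, Fin.prod_univ_succ, Fin.cons_zero, Fin.cons_succ,
    forall_isoB_cons_iff, sum_product]
  simp only [isoMoment, bstE]
  refine sum_congr rfl fun t ht => ?_
  rw [isoProb_pow_eq_sum_piFinset ht, mul_sum]
  exact sum_congr rfl fun g _ => by ring

theorem PisoPow_eq_isoMoment (k r : ℕ) : PisoPow k r = isoMoment k (2 ^ r - 1) := by
  obtain ⟨n, hn⟩ : ∃ n, 2 ^ r = n + 1 := ⟨2 ^ r - 1, (Nat.sub_add_cancel Nat.one_le_two_pow).symm⟩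
  rw [PisoPow, hn, Nat.add_sub_cancel, sum_piFinset_prod_pbst_mul_isoB]

theorem sum_pbst_mul_isoProb_pow_mul_isoB {k : ℕ} (hk : k ≠ 0) (n : ℕ) :
    ∑ a ∈ Icc 1 (k - 1), ∑ l ∈ treesOfSize a, ∑ r ∈ treesOfSize (k - a),
      pbst l * isoProb l ^ n * (pbst r * isoProb r ^ n) * (if isoB r l then 1 else 0) =
      if Even k then isoMoment (k / 2) (2 * n + 1) else 0 := by
  rw [← sum_Icc_ite_sub_eq_self hk fun a => isoMoment a (2 * n + 1)]
  refine sum_congr rfl fun a _ => ?_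
  have hiso (l r : BT) : pbst l * isoProb l ^ n * (pbst r * isoProb r ^ n) *
      (if isoB r l then 1 else 0) =
      pbst l * isoProb l ^ (2 * n) * (pbst r * if isoB r l then 1 else 0) := by
    split_ifs with h
    · rw [isoProb_congr h]; ring
    · simp
  simp only [hiso, ← mul_sum, sum_pbst_mul_isoB]
  split_ifs with ha
  · refine sum_congr rfl fun l hl => ?_
    rw [if_pos (by rw [mem_treesOfSize.1 hl]; exact ha)]
    ring
  · exact sum_eq_zero fun l hl => by rw [if_neg (by rw [mem_treesOfSize.1 hl]; exact ha), mul_zero]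

theorem isoMoment_eq_of_two_le {k : ℕ} (hk : 2 ≤ k) (n : ℕ) :
    isoMoment k n = ((k : ℝ) - 1)⁻¹ ^ (n + 1) *
      (2 ^ n * ∑ a ∈ Icc 1 (k - 1), isoMoment a n * isoMoment (k - a) n -
        (2 ^ n - 1) * if Even k then isoMoment (k / 2) (2 * n + 1) else 0) := by
  -- `c ^ n = 2 ^ n - (2 ^ n - 1) [l ≅ r]` for the factor `c ∈ {1, 2}` of `isoProb_node`.
  have hterm : ∀ a ∈ Icc 1 (k - 1), ∀ l ∈ treesOfSize a, ∀ r ∈ treesOfSize (k - a),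
      pbst l * pbst r * isoProb (node l r) ^ n = ((k : ℝ) - 1)⁻¹ ^ n *
        (2 ^ n * (pbst l * isoProb l ^ n * (pbst r * isoProb r ^ n)) - (2 ^ n - 1) *
          (pbst l * isoProb l ^ n * (pbst r * isoProb r ^ n) * if isoB r l then 1 else 0)) := by
    intro a ha l hl r hr
    rw [isoProb_node, mem_treesOfSize.1 hl, mem_treesOfSize.1 hr,
      Nat.add_sub_cancel' ((mem_Icc.1 ha).2.trans (Nat.sub_le k 1))]
    by_cases h : isoB l r
    · rw [if_pos h, if_pos (isoB_symm h)]; ring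
    · rw [if_neg h, if_neg (mt isoB_symm h)]; ring
  rw [isoMoment, bstE, sum_pbst_mul_eq_sum_node hk, ← sum_pbst_mul_isoProb_pow_mul_isoB (by omega)]
  rw [sum_congr rfl fun a ha => sum_congr rfl fun l hl => sum_congr rfl fun r hr =>
    hterm a ha l hl r hr]
  simp only [isoMoment, bstE, ← mul_sum, mul_sub, sum_sub_distrib, ← sum_mul]
  ring

theorem isoMoment_one (n : ℕ) : isoMoment 1 n = 1 := by
  simp [isoMoment, bstE, treesOfSize, pbst_leaf, isoProb_leaf]

theorem isoMoment_two (n : ℕ) : isoMoment 2 n = 1 := by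
  rw [isoMoment_eq_of_two_le le_rfl]
  norm_num [isoMoment_one]

theorem isoMoment_three (n : ℕ) : isoMoment 3 n = 1 := by
  rw [isoMoment_eq_of_two_le (by norm_num)]
  norm_num [isoMoment_one, isoMoment_two, show Icc 1 2 = {1, 2} from rfl]
  rw [← pow_succ, ← mul_pow]
  norm_num

end BT

open BT in
/-- `P_k^r = 1` for `k ∈ {1,2,3}` and every positive `r`, and for `k ≥ 4`
and every positive `r`, `P_k^r` satisfies the recurrence
`P_k^r = Σ_{i=1}^{⌊(k−1)/2⌋} (2/(k−1))^{2^r}·P_i^r·P_{k−i}^r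
  + δ(k)·(1/(k−1))^{2^r}·(2^{2^r−1}·(P_{k/2}^r)² − (2^{2^r−1}−1)·P_{k/2}^{r+1})`,
where `δ(k) = 1` if `k` is even and `δ(k) = 0` otherwise. -/
theorem PisoPow_recurrence :
    (∀ r : ℕ, 1 ≤ r → ∀ k ∈ ({1, 2, 3} : Finset ℕ), PisoPow k r = 1) ∧
    (∀ k r : ℕ, 4 ≤ k → 1 ≤ r →
      PisoPow k r =
        (∑ i ∈ Finset.Icc 1 ((k - 1) / 2),
          ((2 : ℝ) / ((k : ℝ) - 1)) ^ (2 ^ r) * PisoPow i r * PisoPow (k - i) r)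
        + (if Even k then (1 : ℝ) else 0) * ((1 : ℝ) / ((k : ℝ) - 1)) ^ (2 ^ r) *
            ((2 : ℝ) ^ (2 ^ r - 1) * (PisoPow (k / 2) r) ^ 2
              - ((2 : ℝ) ^ (2 ^ r - 1) - 1) * PisoPow (k / 2) (r + 1))) := by
  refine ⟨fun r _ k hk => ?_, fun k r hk _ => ?_⟩
  · simp only [mem_insert, mem_singleton] at hk
    rcases hk with rfl | rfl | rfl
    · exact (PisoPow_eq_isoMoment 1 r).trans (isoMoment_one _)
    · exact (PisoPow_eq_isoMoment 2 r).trans (isoMoment_two _)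
    · exact (PisoPow_eq_isoMoment 3 r).trans (isoMoment_three _)
  · obtain ⟨n, hn⟩ : ∃ n, 2 ^ r = n + 1 :=
      ⟨2 ^ r - 1, (Nat.sub_add_cancel Nat.one_le_two_pow).symm⟩
    have hn' : 2 ^ (r + 1) - 1 = 2 * n + 1 := by rw [pow_succ]; omega
    simp only [PisoPow_eq_isoMoment, hn, hn', Nat.add_sub_cancel]
    rw [isoMoment_eq_of_two_le (by omega), sum_Icc_eq_two_nsmul_sum_add (by omega) _
      fun a ha => by rw [Nat.sub_sub_self ha, mul_comm]]
    simp only [mul_assoc, ← mul_sum, two_nsmul]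
    split_ifs with he
    · rw [show k - k / 2 = k / 2 by rcases he with ⟨j, rfl⟩; omega]
      ring
    · ring
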